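/- arXiv:1205.3694 — 3 statements merged into one kernel-verified Lean document; each statement's English description precedes it below -/
import Mathlib

section
/- Let μ : R → K be a K-valued measure on a covering ring R on a set X. If {B_n}_{n∈ℕ} is a sequence of pairwise disjoint members of R whose union B = ⋃_{n∈ℕ} B_n also belongs to R, then the series Σ_{n∈ℕ} μ(B_n) converges in K and its sum equals μ(B). -/
open scoped Classical

/-- A covering ring of subsets of `X`: it covers `X` and is closed under
intersections, unions and differences. -/
def IsCoveringRing {X : Type*} (R : Set (Set X)) : Prop :=
  (∀ x : X, ∃ A ∈ R, x ∈ A) ∧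
    ∀ A ∈ R, ∀ B ∈ R, A ∩ B ∈ R ∧ A ∪ B ∈ R ∧ A \ B ∈ R

/-- `R` is separating: distinct points can be separated by a member of `R`. -/
def Separating {X : Type*} (R : Set (Set X)) : Prop :=
  ∀ x y : X, x ≠ y → ∃ A ∈ R, x ∈ A ∧ y ∉ A

/-- A shrinking collection: the intersection of any two members contains a member. -/
def Shrinking {X : Type*} (𝒜 : Set (Set X)) : Prop :=
  ∀ A ∈ 𝒜, ∀ B ∈ 𝒜, ∃ C ∈ 𝒜, C ⊆ A ∩ B

/-- A `K`-valued measure on a covering ring `R`: additive, bounded and continuous. -/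
structure IsKMeasure {X : Type*} {K : Type*} [NormedField K]
    (R : Set (Set X)) (μ : Set X → K) : Prop where
  additive : ∀ A ∈ R, ∀ B ∈ R, Disjoint A B → μ (A ∪ B) = μ A + μ B
  bounded : ∀ A ∈ R, ∃ M : ℝ, ∀ B ∈ R, B ⊆ A → ‖μ B‖ ≤ M
  cont : ∀ 𝒜 ⊆ R, Shrinking 𝒜 → ⋂₀ 𝒜 = ∅ →
    ∀ ε : ℝ, 0 < ε → ∃ A₀ ∈ 𝒜, ∀ A ∈ 𝒜, A ⊆ A₀ → ‖μ A‖ < ε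

/-- `‖A‖_μ = sup {|μ B| : B ∈ R, B ⊆ A}`. -/
noncomputable def setNorm {X K : Type*} [NormedField K]
    (R : Set (Set X)) (μ : Set X → K) (A : Set X) : ℝ :=
  sSup {r : ℝ | ∃ B ∈ R, B ⊆ A ∧ r = ‖μ B‖}

/-- `N_μ(x) = inf {‖A‖_μ : A ∈ R, x ∈ A}`. -/
noncomputable def normFun {X K : Type*} [NormedField K]
    (R : Set (Set X)) (μ : Set X → K) (x : X) : ℝ :=
  sInf {r : ℝ | ∃ A ∈ R, x ∈ A ∧ r = setNorm R μ A}

/-- `‖f‖_μ = sup_{x ∈ X} |f x| ⬝ N_μ(x)`. -/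
noncomputable def fNorm {X K : Type*} [NormedField K]
    (R : Set (Set X)) (μ : Set X → K) (f : X → K) : ℝ :=
  sSup {r : ℝ | ∃ x : X, r = ‖f x‖ * normFun R μ x}

/-- A probability space: `R` is a covering algebra and `μ(X) = 1`. -/
def IsProbSpace {X K : Type*} [NormedField K] (R : Set (Set X)) (μ : Set X → K) : Prop :=
  IsCoveringRing R ∧ Set.univ ∈ R ∧ IsKMeasure R μ ∧ μ Set.univ = 1

/-- A measure algebra isomorphism `(R,μ) → (R',ν)`. -/
def IsMeasAlgIso {X Y K : Type*} [NormedField K] (R : Set (Set X)) (μ : Set X → K)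
    (R' : Set (Set Y)) (ν : Set Y → K) (Φ : Set X → Set Y) : Prop :=
  Set.BijOn Φ R R' ∧
    (∀ A ∈ R, ∀ B ∈ R, Φ (A ∪ B) = Φ A ∪ Φ B) ∧
    (∀ A ∈ R, Φ (Set.univ \ A) = Set.univ \ Φ A) ∧
    (∀ A ∈ R, ν (Φ A) = μ A)

/-- An invertible measure preserving transformation of `(X,R,μ)`. -/
def IsInvMPT {X K : Type*} [NormedField K] (R : Set (Set X)) (μ : Set X → K)
    (T : X → X) : Prop :=
  Function.Bijective T ∧
    (∀ A ∈ R, T '' A ∈ R) ∧ (∀ A ∈ R, T ⁻¹' A ∈ R) ∧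
    (∀ A ∈ R, μ (T '' A) = μ A) ∧ (∀ A ∈ R, μ (T ⁻¹' A) = μ A)

/-- A finite partition of `X` by pairwise disjoint nonempty members of `R`. -/
def IsFinPartition {X : Type*} (R : Set (Set X)) (α : Finset (Set X)) : Prop :=
  (∀ A ∈ α, A ∈ R) ∧ (∀ A ∈ α, A ≠ ∅) ∧
    (∀ A ∈ α, ∀ B ∈ α, A ≠ B → Disjoint A B) ∧
    ⋃₀ (α : Set (Set X)) = Set.univ

/-- The join `α ∨ β` of two partitions, discarding empty intersections. -/
noncomputable def pJoin {X : Type*} (α β : Finset (Set X)) : Finset (Set X) :=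
  (Finset.image₂ (fun A B => A ∩ B) α β).filter (fun C => C ≠ ∅)

/-- `M(α)`: the number of members of `α` of positive norm. -/
noncomputable def Mcard {X K : Type*} [NormedField K] (R : Set (Set X)) (μ : Set X → K)
    (α : Finset (Set X)) : ℕ :=
  (α.filter (fun A => 0 < setNorm R μ A)).card

/-- `H_μ(α) = (min {‖A‖_μ : A ∈ α, ‖A‖_μ > 0}) * log₂ M(α)` (and `0` if `M(α) = 0`,
since `sInf ∅ = 0` and `log₂ 0 = 0` in Mathlib). -/
noncomputable def Hent {X K : Type*} [NormedField K] (R : Set (Set X)) (μ : Set X → K)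
    (α : Finset (Set X)) : ℝ :=
  sInf {r : ℝ | ∃ A ∈ α, 0 < setNorm R μ A ∧ r = setNorm R μ A} *
    Real.logb 2 (Mcard R μ α)

/-- `joinSeq T α n = α ∨ T⁻¹α ∨ ⋯ ∨ T^{-n}α`. -/
noncomputable def joinSeq {X : Type*} (T : X → X) (α : Finset (Set X)) : ℕ → Finset (Set X)
  | 0 => α
  | n + 1 => pJoin (joinSeq T α n) (α.image (fun A => T^[n + 1] ⁻¹' A))

/-- `h_μ(T,α) = lim_{n→∞} H_μ(α ∨ T⁻¹α ∨ ⋯ ∨ T^{-(n-1)}α)/n`. -/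
noncomputable def hMeasPart {X K : Type*} [NormedField K] (R : Set (Set X)) (μ : Set X → K)
    (T : X → X) (α : Finset (Set X)) : ℝ :=
  Filter.limUnder Filter.atTop (fun n : ℕ => Hent R μ (joinSeq T α n) / (n + 1))

/-- `h_μ(T) = sup_α h_μ(T,α)` over finite partitions `α` of `X` relative to `R`. -/
noncomputable def hMeas {X K : Type*} [NormedField K] (R : Set (Set X)) (μ : Set X → K)
    (T : X → X) : ℝ :=
  sSup {r : ℝ | ∃ α : Finset (Set X), IsFinPartition R α ∧ r = hMeasPart R μ T α}

/-- The partition `α(𝒰)` associated to a finite cover `𝒰`: nonempty sets of the form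
`A₁ ∩ ⋯ ∩ A_k` where each `Aᵢ` is `Uᵢ` or `X ∖ Uᵢ`. -/
noncomputable def coverPart {X : Type*} (𝒰 : Finset (Set X)) : Finset (Set X) :=
  ((𝒰.powerset).image fun S => (⋂ U ∈ S, U) ∩ ⋂ U ∈ 𝒰 \ S, (Set.univ \ U)).filter
    (fun C => C ≠ ∅)

/-- The join `𝒰 ∨ 𝒲` of two covers. -/
noncomputable def cJoin {X : Type*} (𝒰 𝒲 : Finset (Set X)) : Finset (Set X) :=
  Finset.image₂ (fun U W => U ∩ W) 𝒰 𝒲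

/-- `N(𝒰)`: the least cardinality of a subcover of `𝒰`. -/
noncomputable def coverN {X : Type*} (𝒰 : Finset (Set X)) : ℕ :=
  sInf {n : ℕ | ∃ 𝒱 : Finset (Set X), 𝒱 ⊆ 𝒰 ∧ ⋃₀ (𝒱 : Set (Set X)) = Set.univ ∧ 𝒱.card = n}

/-- `H_top(𝒰) = log₂ N(𝒰)`. -/
noncomputable def Htop {X : Type*} (𝒰 : Finset (Set X)) : ℝ :=
  Real.logb 2 (coverN 𝒰)

/-- `cJoinSeq T 𝒰 n = 𝒰 ∨ T⁻¹𝒰 ∨ ⋯ ∨ T^{-n}𝒰`. -/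
noncomputable def cJoinSeq {X : Type*} (T : X → X) (𝒰 : Finset (Set X)) : ℕ → Finset (Set X)
  | 0 => 𝒰
  | n + 1 => cJoin (cJoinSeq T 𝒰 n) (𝒰.image (fun U => T^[n + 1] ⁻¹' U))

/-- `h_top(T,𝒰) = lim_{n→∞} H_top(𝒰 ∨ T⁻¹𝒰 ∨ ⋯ ∨ T^{-(n-1)}𝒰)/n`. -/
noncomputable def hTopCov {X : Type*} (T : X → X) (𝒰 : Finset (Set X)) : ℝ :=
  Filter.limUnder Filter.atTop (fun n : ℕ => Htop (cJoinSeq T 𝒰 n) / (n + 1))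

/-- `h_top(T) = sup_𝒰 h_top(T,𝒰)` over finite open covers `𝒰` of `X` for the
topology `t`. -/
noncomputable def hTop {X : Type*} (t : TopologicalSpace X) (T : X → X) : ℝ :=
  sSup {r : ℝ | ∃ 𝒰 : Finset (Set X), (∀ U ∈ 𝒰, t.IsOpen U) ∧
    ⋃₀ (𝒰 : Set (Set X)) = Set.univ ∧ r = hTopCov T 𝒰}

/-!
Write `S N = B 0 ∪ ⋯ ∪ B (N-1)` and `U = ⋃ n, B n`. Finite additivity gives
`μ U = ∑_{n<N} μ (B n) + μ (U \ S N)`. The tails `U \ S N` lie in `R`, decrease and have empty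
intersection, so they form a shrinking collection and continuity of `μ` forces `μ (U \ S N) → 0`.
-/

open Filter Function Topology

section

variable {X : Type*} {R : Set (Set X)}

namespace IsCoveringRing

variable {A C : Set X}

theorem union_mem (hR : IsCoveringRing R) (hA : A ∈ R) (hC : C ∈ R) :
    A ∪ C ∈ R :=
  (hR.2 A hA C hC).2.1

theorem diff_mem (hR : IsCoveringRing R) (hA : A ∈ R) (hC : C ∈ R) :
    A \ C ∈ R :=
  (hR.2 A hA C hC).2.2

theorem empty_mem (hR : IsCoveringRing R) (hA : A ∈ R) : ∅ ∈ R := by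
  simpa using hR.diff_mem hA hA

theorem biUnion_range_mem (hR : IsCoveringRing R) {B : ℕ → Set X} (hB : ∀ n, B n ∈ R)
    (N : ℕ) : (⋃ n ∈ Finset.range N, B n) ∈ R := by
  induction N with
  | zero => simpa using hR.empty_mem (hB 0)
  | succ N ih =>
    rw [Finset.range_add_one, Finset.set_biUnion_insert]
    exact hR.union_mem (hB N) ih

end IsCoveringRing

namespace IsKMeasure

variable {K : Type*} [NormedField K] {μ : Set X → K}

theorem map_empty (hμ : IsKMeasure R μ) (h : ∅ ∈ R) : μ ∅ = 0 := by
  simpa using hμ.additive ∅ h ∅ h (by simp)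

theorem map_biUnion_range (hμ : IsKMeasure R μ) (hR : IsCoveringRing R) {B : ℕ → Set X}
    (hB : ∀ n, B n ∈ R) (hdisj : Pairwise (Disjoint on B)) (N : ℕ) :
    μ (⋃ n ∈ Finset.range N, B n) = ∑ n ∈ Finset.range N, μ (B n) := by
  induction N with
  | zero => simpa using hμ.map_empty (hR.empty_mem (hB 0))
  | succ N ih =>
    have hdisjN : Disjoint (B N) (⋃ n ∈ Finset.range N, B n) :=
      Set.disjoint_iUnion₂_right.mpr fun n hn =>
        hdisj (Finset.mem_range.mp hn).ne'
    rw [Finset.range_add_one, Finset.set_biUnion_insert,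
      hμ.additive _ (hB N) _ (hR.biUnion_range_mem hB N) hdisjN, ih, Finset.sum_insert (by simp)]

theorem tendsto_zero_of_antitone {ι : Type*} [Preorder ι] [IsDirectedOrder ι] [Nonempty ι]
    (hμ : IsKMeasure R μ) {T : ι → Set X} (hT : ∀ i, T i ∈ R) (hanti : Antitone T)
    (hempty : ⋂ i, T i = ∅) : Tendsto (fun i => μ (T i)) atTop (𝓝 0) := by
  have hshrink : Shrinking (Set.range T) := by
    rintro _ ⟨i, rfl⟩ _ ⟨j, rfl⟩
    obtain ⟨k, hik, hjk⟩ := exists_ge_ge i j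
    exact ⟨T k, ⟨k, rfl⟩, Set.subset_inter (hanti hik) (hanti hjk)⟩
  rw [NormedAddGroup.tendsto_nhds_zero]
  intro ε hε
  obtain ⟨_, ⟨i₀, rfl⟩, hsmall⟩ := hμ.cont _ (Set.range_subset_iff.mpr hT) hshrink
    (by rwa [Set.sInter_range]) ε hε
  exact eventually_atTop.mpr ⟨i₀, fun i hi => hsmall (T i) ⟨i, rfl⟩ (hanti hi)⟩

end IsKMeasure

theorem antitone_iUnion_diff_biUnion_range (B : ℕ → Set X) :
    Antitone fun N => (⋃ n, B n) \ ⋃ n ∈ Finset.range N, B n :=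
  fun _ _ hMN => Set.sdiff_subset_sdiff_right <|
    Set.biUnion_subset_biUnion_left (by simpa using hMN)

theorem iInter_iUnion_diff_biUnion_range (B : ℕ → Set X) :
    ⋂ N, ((⋃ n, B n) \ ⋃ n ∈ Finset.range N, B n) = ∅ := by
  refine Set.eq_empty_of_forall_notMem fun x hx => ?_
  obtain ⟨n, hn⟩ := Set.mem_iUnion.mp (Set.mem_iInter.mp hx 0).1
  exact (Set.mem_iInter.mp hx (n + 1)).2 (Set.mem_biUnion (by simp) hn)

end

theorem stmt0_general {X K : Type*} [NontriviallyNormedField K]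
    (R : Set (Set X)) (hR : IsCoveringRing R) (μ : Set X → K) (hμ : IsKMeasure R μ)
    (B : ℕ → Set X) (hB : ∀ n, B n ∈ R)
    (hdisj : ∀ m n : ℕ, m ≠ n → Disjoint (B m) (B n))
    (hU : (⋃ n, B n) ∈ R) :
    Filter.Tendsto (fun N : ℕ => ∑ n ∈ Finset.range N, μ (B n)) Filter.atTop
      (nhds (μ (⋃ n, B n))) := by
  set S : ℕ → Set X := fun N => ⋃ n ∈ Finset.range N, B n
  have hS : ∀ N, S N ∈ R := hR.biUnion_range_mem hB
  have hT : ∀ N, (⋃ n, B n) \ S N ∈ R := fun N => hR.diff_mem hU (hS N)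
  have htail : Tendsto (fun N => μ ((⋃ n, B n) \ S N)) atTop (𝓝 0) :=
    hμ.tendsto_zero_of_antitone hT
      (antitone_iUnion_diff_biUnion_range B) (iInter_iUnion_diff_biUnion_range B)
  have hsplit :
      ∀ N, μ (⋃ n, B n) = ∑ n ∈ Finset.range N, μ (B n) + μ ((⋃ n, B n) \ S N) := fun N => by
    rw [← hμ.map_biUnion_range hR hB hdisj N,
      ← hμ.additive _ (hS N) _ (hT N) Set.disjoint_sdiff_right,
      Set.union_sdiff_cancel (Set.iUnion₂_subset fun n _ => Set.subset_iUnion B n)]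
  have hlim := (tendsto_const_nhds (x := μ (⋃ n, B n))).sub htail
  rw [sub_zero] at hlim
  exact hlim.congr fun N => (eq_sub_of_add_eq (hsplit N).symm).symm

/-- For a `K`-valued measure `μ` on a covering ring `R`, if `(B n)` are
pairwise disjoint members of `R` whose union is in `R`, then `∑ μ(B n)` converges to
`μ(⋃ n, B n)`. -/
theorem stmt0 {X K : Type*} [NontriviallyNormedField K] [CompleteSpace K]
    (hna : IsNonarchimedean (norm : K → ℝ))
    (R : Set (Set X)) (hR : IsCoveringRing R) (μ : Set X → K) (hμ : IsKMeasure R μ)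
    (B : ℕ → Set X) (hB : ∀ n, B n ∈ R)
    (hdisj : ∀ m n : ℕ, m ≠ n → Disjoint (B m) (B n))
    (hU : (⋃ n, B n) ∈ R) :
    Filter.Tendsto (fun N : ℕ => ∑ n ∈ Finset.range N, μ (B n)) Filter.atTop
      (nhds (μ (⋃ n, B n))) :=
  stmt0_general R hR μ hμ B hB hdisj hU
end

section
/- Let μ : R → K be a map on a covering ring R on a set X that is additive and bounded. Then μ is continuous if and only if the following holds: for every shrinking collection 𝒜 ⊆ R with ⋂_{A∈𝒜} A = ∅ and every ε > 0 there exists A₀ ∈ 𝒜 such that ‖A‖_μ < ε for all A ∈ 𝒜 with A ⊆ A₀. -/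
open scoped Classical

open Set

section ShrinkingContinuity

variable {X : Type*} {R 𝒜 : Set (Set X)}

/-- `μ` is continuous in the sense of the paper iff `VanishesOnShrinking R (‖μ ·‖)`. -/
def VanishesOnShrinking (R : Set (Set X)) (f : Set X → ℝ) : Prop :=
  ∀ 𝒜 ⊆ R, Shrinking 𝒜 → ⋂₀ 𝒜 = ∅ →
    ∀ ε : ℝ, 0 < ε → ∃ A₀ ∈ 𝒜, ∀ A ∈ 𝒜, A ⊆ A₀ → f A < ε

theorem VanishesOnShrinking.mono {f g : Set X → ℝ} (hg : VanishesOnShrinking R g)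
    (hfg : ∀ A ∈ R, f A ≤ g A) : VanishesOnShrinking R f := by
  intro 𝒜 h𝒜R hshr hint ε hε
  obtain ⟨A₀, hA₀, hsmall⟩ := hg 𝒜 h𝒜R hshr hint ε hε
  exact ⟨A₀, hA₀, fun A hA hAA₀ => (hfg A (h𝒜R hA)).trans_lt (hsmall A hA hAA₀)⟩

theorem sInter_subset_sInter_of_forall_exists_subset {𝒜 ℬ : Set (Set X)}
    (h : ∀ A ∈ 𝒜, ∃ B ∈ ℬ, B ⊆ A) : ⋂₀ ℬ ⊆ ⋂₀ 𝒜 := fun _ hx A hA =>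
  let ⟨B, hB, hBA⟩ := h A hA
  hBA (hx B hB)

theorem Shrinking.image_of_monotone (hshr : Shrinking 𝒜) {f : Set X → Set X}
    (hf : Monotone f) : Shrinking (f '' 𝒜) := by
  rintro _ ⟨A, hA, rfl⟩ _ ⟨B, hB, rfl⟩
  obtain ⟨C, hC, hCAB⟩ := hshr A hA B hB
  exact ⟨f C, ⟨C, hC, rfl⟩, subset_inter (hf (hCAB.trans inter_subset_left))
    (hf (hCAB.trans inter_subset_right))⟩

theorem Shrinking.upperClosureIn (hR : IsCoveringRing R) (hshr : Shrinking 𝒜) :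
    Shrinking {B ∈ R | ∃ A ∈ 𝒜, A ⊆ B} := by
  rintro B ⟨hB, A, hA, hAB⟩ B' ⟨hB', A', hA', hA'B'⟩
  obtain ⟨C, hC, hCAA'⟩ := hshr A hA A' hA'
  exact ⟨B ∩ B', ⟨(hR.2 B hB B' hB').1, C, hC, hCAA'.trans (inter_subset_inter hAB hA'B')⟩,
    subset_rfl⟩

/-- Apply `hf` to the traces `(· ∩ C) '' 𝒜`, then shrink below `A₀`. -/
theorem VanishesOnShrinking.exists_lt_inter {f : Set X → ℝ} (hf : VanishesOnShrinking R f)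
    (hR : IsCoveringRing R) (h𝒜R : 𝒜 ⊆ R) (hshr : Shrinking 𝒜) (hint : ⋂₀ 𝒜 = ∅)
    {A₀ : Set X} (hA₀ : A₀ ∈ 𝒜) {C : Set X} (hC : C ∈ R) {ε : ℝ} (hε : 0 < ε) :
    ∃ A ∈ 𝒜, A ⊆ A₀ ∧ f (A ∩ C) < ε := by
  have htrR : (· ∩ C) '' 𝒜 ⊆ R := by
    rintro _ ⟨A, hA, rfl⟩
    exact (hR.2 A (h𝒜R hA) C hC).1
  have htrint : ⋂₀ ((· ∩ C) '' 𝒜) = ∅ := subset_empty_iff.mp <| hint ▸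
    sInter_subset_sInter_of_forall_exists_subset fun A hA =>
      ⟨A ∩ C, mem_image_of_mem _ hA, inter_subset_left⟩
  obtain ⟨_, ⟨A₁, hA₁, rfl⟩, hsmall⟩ := hf _ htrR
    (hshr.image_of_monotone fun _ _ h => inter_subset_inter_left C h) htrint ε hε
  obtain ⟨A, hA, hAA₁A₀⟩ := hshr A₁ hA₁ A₀ hA₀
  exact ⟨A, hA, hAA₁A₀.trans inter_subset_right, hsmall _ (mem_image_of_mem _ hA)
    (inter_subset_inter_left C (hAA₁A₀.trans inter_subset_left))⟩

theorem VanishesOnShrinking.exists_forall_lt_of_superset {f : Set X → ℝ}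
    (hf : VanishesOnShrinking R f) (hR : IsCoveringRing R) (h𝒜R : 𝒜 ⊆ R)
    (hshr : Shrinking 𝒜) (hint : ⋂₀ 𝒜 = ∅) {ε : ℝ} (hε : 0 < ε) :
    ∃ A₀ ∈ 𝒜, ∀ B ∈ R, B ⊆ A₀ → (∃ A ∈ 𝒜, A ⊆ B) → f B < ε := by
  have hint' : ⋂₀ {B ∈ R | ∃ A ∈ 𝒜, A ⊆ B} = ∅ := subset_empty_iff.mp <| hint ▸
    sInter_subset_sInter_of_forall_exists_subset fun A hA =>
      ⟨A, ⟨h𝒜R hA, A, hA, subset_rfl⟩, subset_rfl⟩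
  obtain ⟨B₀, ⟨-, A₀, hA₀, hA₀B₀⟩, hsmall⟩ :=
    hf _ (fun _ hB => hB.1) (hshr.upperClosureIn hR) hint' ε hε
  exact ⟨A₀, hA₀, fun B hB hBA₀ hsup => hsmall B ⟨hB, hsup⟩ (hBA₀.trans hA₀B₀)⟩

end ShrinkingContinuity

section Additive

variable {X K : Type*} {R : Set (Set X)} {μ : Set X → K}

theorem additive_union_add_inter [AddCommMonoid K] (hR : IsCoveringRing R)
    (hadd : ∀ A ∈ R, ∀ B ∈ R, Disjoint A B → μ (A ∪ B) = μ A + μ B)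
    {A B : Set X} (hA : A ∈ R) (hB : B ∈ R) : μ (A ∪ B) + μ (A ∩ B) = μ A + μ B := by
  have hBA : B \ A ∈ R := (hR.2 B hB A hA).2.2
  have hunion := hadd A hA (B \ A) hBA disjoint_sdiff_right
  have hsplit := hadd (B ∩ A) (hR.2 B hB A hA).1 (B \ A) hBA
    (disjoint_sdiff_right.mono_left inter_subset_right)
  rw [union_sdiff_self] at hunion
  rw [inter_union_sdiff] at hsplit
  rw [hunion, hsplit, inter_comm, add_assoc, add_comm (μ (B \ A))]

theorem IsNonarchimedean.norm_add_sub_lt [SeminormedAddCommGroup K]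
    (hna : IsNonarchimedean (norm : K → ℝ)) {a b c : K} {ε : ℝ} (ha : ‖a‖ < ε)
    (hb : ‖b‖ < ε) (hc : ‖c‖ < ε) : ‖a + b - c‖ < ε :=
  calc ‖a + b - c‖ = ‖(a + b) + -c‖ := by rw [sub_eq_add_neg]
    _ ≤ max ‖a + b‖ ‖-c‖ := hna _ _
    _ < ε := max_lt ((hna a b).trans_lt (max_lt ha hb)) (by rwa [norm_neg])

theorem norm_le_setNorm [NormedField K] {A : Set X} (hA : A ∈ R)
    (hbdd : ∃ M : ℝ, ∀ B ∈ R, B ⊆ A → ‖μ B‖ ≤ M) : ‖μ A‖ ≤ setNorm R μ A := by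
  obtain ⟨M, hM⟩ := hbdd
  refine le_csSup ⟨M, ?_⟩ ⟨A, hA, subset_rfl, rfl⟩
  rintro _ ⟨B, hB, hBA, rfl⟩
  exact hM B hB hBA

theorem setNorm_le [NormedField K] {A : Set X} {c : ℝ} (hc : 0 ≤ c)
    (h : ∀ B ∈ R, B ⊆ A → ‖μ B‖ ≤ c) : setNorm R μ A ≤ c :=
  Real.sSup_le (fun _ ⟨B, hB, hBA, hr⟩ => hr ▸ h B hB hBA) hc

/-- Take `A₀` with `μ` small on every member of `R` between a member of `𝒜` and `A₀`. For
`C ⊆ A ⊆ A₀` pick `A' ⊆ A` in `𝒜` with `μ (A' ∩ C)` small; then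
`μ C = μ (C ∪ A') + μ (C ∩ A') - μ A'` is small by the ultrametric inequality. -/
theorem exists_forall_norm_lt_of_subset [NormedField K] (hna : IsNonarchimedean (norm : K → ℝ))
    (hR : IsCoveringRing R) (hadd : ∀ A ∈ R, ∀ B ∈ R, Disjoint A B → μ (A ∪ B) = μ A + μ B)
    (hcont : VanishesOnShrinking R (‖μ ·‖)) {𝒜 : Set (Set X)} (h𝒜R : 𝒜 ⊆ R)
    (hshr : Shrinking 𝒜) (hint : ⋂₀ 𝒜 = ∅) {ε : ℝ} (hε : 0 < ε) :
    ∃ A₀ ∈ 𝒜, ∀ A ∈ 𝒜, A ⊆ A₀ → ∀ C ∈ R, C ⊆ A → ‖μ C‖ < ε := by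
  obtain ⟨A₀, hA₀, hsmall⟩ := hcont.exists_forall_lt_of_superset hR h𝒜R hshr hint hε
  refine ⟨A₀, hA₀, fun A hA hAA₀ C hC hCA => ?_⟩
  obtain ⟨A', hA', hA'A, htrace⟩ := hcont.exists_lt_inter hR h𝒜R hshr hint hA hC hε
  have hA'R := h𝒜R hA'
  have hunion : ‖μ (C ∪ A')‖ < ε := hsmall _ (hR.2 C hC A' hA'R).2.1
    (union_subset (hCA.trans hAA₀) (hA'A.trans hAA₀)) ⟨A', hA', subset_union_right⟩
  have hA'small : ‖μ A'‖ < ε := hsmall A' hA'R (hA'A.trans hAA₀) ⟨A', hA', subset_rfl⟩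
  have hdecomp : μ C = μ (C ∪ A') + μ (C ∩ A') - μ A' := by
    rw [additive_union_add_inter hR hadd hC hA'R, add_sub_cancel_right]
  rw [hdecomp, inter_comm C]
  exact hna.norm_add_sub_lt hunion htrace hA'small

theorem vanishesOnShrinking_setNorm [NormedField K] (hna : IsNonarchimedean (norm : K → ℝ))
    (hR : IsCoveringRing R) (hadd : ∀ A ∈ R, ∀ B ∈ R, Disjoint A B → μ (A ∪ B) = μ A + μ B)
    (hcont : VanishesOnShrinking R (‖μ ·‖)) : VanishesOnShrinking R (setNorm R μ) := by
  intro 𝒜 h𝒜R hshr hint ε hε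
  obtain ⟨A₀, hA₀, hsmall⟩ :=
    exists_forall_norm_lt_of_subset hna hR hadd hcont h𝒜R hshr hint (half_pos hε)
  refine ⟨A₀, hA₀, fun A hA hAA₀ => ?_⟩
  calc setNorm R μ A ≤ ε / 2 :=
        setNorm_le (half_pos hε).le fun C hC hCA => (hsmall A hA hAA₀ C hC hCA).le
    _ < ε := half_lt_self hε

end Additive

theorem stmt1_general {X K : Type*} [NontriviallyNormedField K]
    (hna : IsNonarchimedean (norm : K → ℝ))
    (R : Set (Set X)) (hR : IsCoveringRing R) (μ : Set X → K)
    (hadd : ∀ A ∈ R, ∀ B ∈ R, Disjoint A B → μ (A ∪ B) = μ A + μ B)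
    (hbdd : ∀ A ∈ R, ∃ M : ℝ, ∀ B ∈ R, B ⊆ A → ‖μ B‖ ≤ M) :
    (∀ 𝒜 ⊆ R, Shrinking 𝒜 → ⋂₀ 𝒜 = ∅ →
        ∀ ε : ℝ, 0 < ε → ∃ A₀ ∈ 𝒜, ∀ A ∈ 𝒜, A ⊆ A₀ → ‖μ A‖ < ε) ↔
      (∀ 𝒜 ⊆ R, Shrinking 𝒜 → ⋂₀ 𝒜 = ∅ →
        ∀ ε : ℝ, 0 < ε → ∃ A₀ ∈ 𝒜, ∀ A ∈ 𝒜, A ⊆ A₀ → setNorm R μ A < ε) :=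
  ⟨vanishesOnShrinking_setNorm hna hR hadd,
    fun h => VanishesOnShrinking.mono h fun A hA => norm_le_setNorm hA (hbdd A hA)⟩

/-- For an additive bounded `μ : R → K`, continuity is equivalent to the
corresponding condition for `‖·‖_μ`. -/
theorem stmt1 {X K : Type*} [NontriviallyNormedField K] [CompleteSpace K]
    (hna : IsNonarchimedean (norm : K → ℝ))
    (R : Set (Set X)) (hR : IsCoveringRing R) (μ : Set X → K)
    (hadd : ∀ A ∈ R, ∀ B ∈ R, Disjoint A B → μ (A ∪ B) = μ A + μ B)
    (hbdd : ∀ A ∈ R, ∃ M : ℝ, ∀ B ∈ R, B ⊆ A → ‖μ B‖ ≤ M) :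
    (∀ 𝒜 ⊆ R, Shrinking 𝒜 → ⋂₀ 𝒜 = ∅ →
        ∀ ε : ℝ, 0 < ε → ∃ A₀ ∈ 𝒜, ∀ A ∈ 𝒜, A ⊆ A₀ → ‖μ A‖ < ε) ↔
      (∀ 𝒜 ⊆ R, Shrinking 𝒜 → ⋂₀ 𝒜 = ∅ →
        ∀ ε : ℝ, 0 < ε → ∃ A₀ ∈ 𝒜, ∀ A ∈ 𝒜, A ⊆ A₀ → setNorm R μ A < ε) :=
  stmt1_general hna R hR μ hadd hbdd
end

section
/- Let (X,R,μ) and (Y,R',ν) be probability spaces over K whose covering rings R and R' are separating, and assume that for every x ∈ X the set X∖{x} is a union of countably many members of R, and for every y ∈ Y the set Y∖{y} is a union of countably many members of R'. Let T and S be invertible measure preserving transformations of (X,R,μ) and (Y,R',ν) respectively, and suppose there is a measure algebra isomorphism Φ : (R,μ) → (R',ν) with Φ(T⁻¹(A)) = S⁻¹(Φ(A)) for every A ∈ R. Then there exists a bijection φ : X∖X₀(μ) → Y∖Y₀(ν) such that φ(A∖X₀(μ)) = Φ(A)∖Y₀(ν) for every A ∈ R and φ(T(x)) = S(φ(x)) for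 every x ∈ X∖X₀(μ); in particular T and S are isomorphic. -/
open scoped Classical

/-
For `x` with `N_μ(x) ≠ 0`, the images `Φ(A)` of the sets `A ∈ R` containing `x` have nonempty
intersection: otherwise they form a shrinking collection with empty intersection, and continuity
of `ν` makes `μ` small on all those `A` inside some `A₀`, hence makes `‖A₀‖_μ` small, forcing
`N_μ(x) = 0`. Any point `y` of that intersection lies in `Φ(A)` exactly when `x ∈ A`; separation
makes `y` unique, and we set `φ(x) = y`. The same argument for `Φ⁻¹` gives surjectivity, and
since `Φ(T⁻¹A) = S⁻¹(Φ A)` the point `S(φ x)` has the defining property of `φ(T x)`.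
-/

open Set

section PointIsomorphism

variable {X Y K : Type*} [NormedField K]

def IsPointImage (R : Set (Set X)) (Φ : Set X → Set Y) (x : X) (y : Y) : Prop :=
  ∀ A ∈ R, y ∈ Φ A ↔ x ∈ A

namespace IsProbSpace

variable {R : Set (Set X)} {μ : Set X → K}

theorem inter_mem (h : IsProbSpace R μ) {A B : Set X} (hA : A ∈ R) (hB : B ∈ R) :
    A ∩ B ∈ R :=
  (h.1.2 A hA B hB).1

theorem union_mem (h : IsProbSpace R μ) {A B : Set X} (hA : A ∈ R) (hB : B ∈ R) :
    A ∪ B ∈ R :=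
  (h.1.2 A hA B hB).2.1

theorem diff_mem (h : IsProbSpace R μ) {A B : Set X} (hA : A ∈ R) (hB : B ∈ R) :
    A \ B ∈ R :=
  (h.1.2 A hA B hB).2.2

theorem empty_mem (h : IsProbSpace R μ) : (∅ : Set X) ∈ R := by
  simpa using h.diff_mem h.2.1 h.2.1

theorem measure_empty (h : IsProbSpace R μ) : μ ∅ = 0 := by
  have := h.2.2.1.additive ∅ h.empty_mem ∅ h.empty_mem (disjoint_empty _)
  rwa [union_empty, left_eq_add] at this

theorem measure_diff (h : IsProbSpace R μ) {A B : Set X} (hA : A ∈ R) (hB : B ∈ R)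
    (hBA : B ⊆ A) : μ (A \ B) = μ A - μ B := by
  have := h.2.2.1.additive B hB (A \ B) (h.diff_mem hA hB) disjoint_sdiff_right
  rw [union_sdiff_cancel hBA] at this
  rw [this, add_sub_cancel_left]

theorem nonempty (h : IsProbSpace R μ) : Nonempty X := by
  by_contra hX
  have := h.2.2.2
  rw [univ_eq_empty_iff.mpr (not_nonempty_iff.mp hX), h.measure_empty] at this
  exact zero_ne_one this

theorem norm_le_setNorm (h : IsProbSpace R μ) {A B : Set X} (hA : A ∈ R) (hB : B ∈ R)
    (hBA : B ⊆ A) : ‖μ B‖ ≤ setNorm R μ A := by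
  obtain ⟨M, hM⟩ := h.2.2.1.bounded A hA
  refine le_csSup ⟨M, ?_⟩ ⟨B, hB, hBA, rfl⟩
  rintro r ⟨C, hC, hCA, rfl⟩
  exact hM C hC hCA

theorem setNorm_nonneg (h : IsProbSpace R μ) {A : Set X} (hA : A ∈ R) :
    0 ≤ setNorm R μ A := by
  simpa [h.measure_empty] using h.norm_le_setNorm hA h.empty_mem (empty_subset A)

theorem setNorm_le (h : IsProbSpace R μ) {A : Set X} {c : ℝ}
    (hc : ∀ B ∈ R, B ⊆ A → ‖μ B‖ ≤ c) : setNorm R μ A ≤ c := by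
  refine csSup_le ⟨_, ∅, h.empty_mem, empty_subset A, rfl⟩ ?_
  rintro r ⟨B, hB, hBA, rfl⟩
  exact hc B hB hBA

theorem normFun_le_setNorm (h : IsProbSpace R μ) {A : Set X} (hA : A ∈ R) {x : X}
    (hx : x ∈ A) : normFun R μ x ≤ setNorm R μ A := by
  refine csInf_le ⟨0, ?_⟩ ⟨A, hA, hx, rfl⟩
  rintro r ⟨B, hB, -, rfl⟩
  exact h.setNorm_nonneg hB

theorem normFun_nonneg (h : IsProbSpace R μ) (x : X) : 0 ≤ normFun R μ x := by
  refine le_csInf ⟨_, univ, h.2.1, mem_univ x, rfl⟩ ?_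
  rintro r ⟨B, hB, -, rfl⟩
  exact h.setNorm_nonneg hB

/-- A set `B ⊆ A₀` either contains `x`, or is `A₀ ∖ (A₀ ∖ B)` with `x ∈ A₀ ∖ B`. -/
theorem setNorm_le_two_mul (h : IsProbSpace R μ) {x : X} {A₀ : Set X} (hA₀ : A₀ ∈ R)
    (hxA₀ : x ∈ A₀) {ε : ℝ} (hsmall : ∀ A ∈ R, x ∈ A → A ⊆ A₀ → ‖μ A‖ < ε) :
    setNorm R μ A₀ ≤ 2 * ε := by
  refine h.setNorm_le fun B hB hBA => ?_
  by_cases hxB : x ∈ B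
  · linarith [hsmall B hB hxB hBA, norm_nonneg (μ B)]
  · have hdiff : A₀ \ B ∈ R := h.diff_mem hA₀ hB
    have hB_eq : μ B = μ A₀ - μ (A₀ \ B) := by
      rw [h.measure_diff hA₀ hB hBA, sub_sub_cancel]
    calc ‖μ B‖ = ‖μ A₀ - μ (A₀ \ B)‖ := by rw [hB_eq]
      _ ≤ ‖μ A₀‖ + ‖μ (A₀ \ B)‖ := norm_sub_le _ _
      _ ≤ 2 * ε := by
        linarith [hsmall A₀ hA₀ hxA₀ subset_rfl, hsmall _ hdiff ⟨hxA₀, hxB⟩ sdiff_subset]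

theorem normFun_eq_zero_of_forall_pos_exists_mem (h : IsProbSpace R μ) {x : X}
    (hsmall : ∀ ε > 0, ∃ A₀ ∈ R, x ∈ A₀ ∧ ∀ A ∈ R, x ∈ A → A ⊆ A₀ → ‖μ A‖ < ε) :
    normFun R μ x = 0 := by
  refine le_antisymm (le_of_forall_pos_le_add fun ε hε => ?_) (h.normFun_nonneg x)
  obtain ⟨A₀, hA₀, hxA₀, hA₀small⟩ := hsmall (ε / 2) (half_pos hε)
  calc normFun R μ x ≤ setNorm R μ A₀ := h.normFun_le_setNorm hA₀ hxA₀
    _ ≤ 2 * (ε / 2) := h.setNorm_le_two_mul hA₀ hxA₀ hA₀small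
    _ = 0 + ε := by ring

end IsProbSpace

namespace IsInvMPT

variable {R : Set (Set X)} {μ : Set X → K} {T : X → X}

theorem setNorm_preimage (hXp : IsProbSpace R μ) (hT : IsInvMPT R μ T) {A : Set X}
    (hA : A ∈ R) : setNorm R μ (T ⁻¹' A) = setNorm R μ A := by
  refine le_antisymm (hXp.setNorm_le fun B hB hBA => ?_) (hXp.setNorm_le fun B hB hBA => ?_)
  · rw [← hT.2.2.2.1 B hB]
    exact hXp.norm_le_setNorm hA (hT.2.1 B hB) (image_subset_iff.mpr hBA)
  · rw [← hT.2.2.2.2 B hB]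
    exact hXp.norm_le_setNorm (hT.2.2.1 A hA) (hT.2.2.1 B hB) (preimage_mono hBA)

theorem normFun_apply (hXp : IsProbSpace R μ) (hT : IsInvMPT R μ T) (x : X) :
    normFun R μ (T x) = normFun R μ x := by
  unfold normFun
  congr 1
  ext r
  constructor
  · rintro ⟨A, hA, hTx, rfl⟩
    exact ⟨T ⁻¹' A, hT.2.2.1 A hA, hTx, (hT.setNorm_preimage hXp hA).symm⟩
  · rintro ⟨A, hA, hx, rfl⟩
    refine ⟨T '' A, hT.2.1 A hA, mem_image_of_mem T hx, ?_⟩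
    rw [← hT.setNorm_preimage hXp (hT.2.1 A hA), preimage_image_eq A hT.1.1]

end IsInvMPT

namespace IsMeasAlgIso

variable {R : Set (Set X)} {μ : Set X → K} {R' : Set (Set Y)} {ν : Set Y → K}
  {Φ : Set X → Set Y}

theorem mono (hΦ : IsMeasAlgIso R μ R' ν Φ) {A B : Set X} (hA : A ∈ R) (hB : B ∈ R)
    (hAB : A ⊆ B) : Φ A ⊆ Φ B := by
  rw [← union_eq_right.mpr hAB, hΦ.2.1 A hA B hB]
  exact subset_union_left

theorem subset_of_map_subset (hXp : IsProbSpace R μ) (hΦ : IsMeasAlgIso R μ R' ν Φ)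
    {A B : Set X} (hA : A ∈ R) (hB : B ∈ R) (hAB : Φ A ⊆ Φ B) : A ⊆ B := by
  have h : Φ (A ∪ B) = Φ B := by rw [hΦ.2.1 A hA B hB, union_eq_right.mpr hAB]
  exact union_eq_right.mp (hΦ.1.2.1 (hXp.union_mem hA hB) hB h)

theorem map_inter (hXp : IsProbSpace R μ) (hΦ : IsMeasAlgIso R μ R' ν Φ) {A B : Set X}
    (hA : A ∈ R) (hB : B ∈ R) : Φ (A ∩ B) = Φ A ∩ Φ B := by
  have hcA := hXp.diff_mem hXp.2.1 hA
  have hcB := hXp.diff_mem hXp.2.1 hB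
  have hAB : A ∩ B = univ \ ((univ \ A) ∪ (univ \ B)) := by ext; simp
  rw [hAB, hΦ.2.2.1 _ (hXp.union_mem hcA hcB), hΦ.2.1 _ hcA _ hcB, hΦ.2.2.1 A hA,
    hΦ.2.2.1 B hB]
  ext; simp

theorem setNorm_map (hXp : IsProbSpace R μ) (hYp : IsProbSpace R' ν)
    (hΦ : IsMeasAlgIso R μ R' ν Φ) {A : Set X} (hA : A ∈ R) :
    setNorm R' ν (Φ A) = setNorm R μ A := by
  refine le_antisymm (hYp.setNorm_le fun B' hB' hB'A => ?_) (hXp.setNorm_le fun B hB hBA => ?_)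
  · obtain ⟨B, hB, rfl⟩ := hΦ.1.2.2 hB'
    rw [hΦ.2.2.2 B hB]
    exact hXp.norm_le_setNorm hA hB (hΦ.subset_of_map_subset hXp hB hA hB'A)
  · rw [← hΦ.2.2.2 B hB]
    exact hYp.norm_le_setNorm (hΦ.1.1 hA) (hΦ.1.1 hB) (hΦ.mono hB hA hBA)

theorem symm (hXp : IsProbSpace R μ) (hΦ : IsMeasAlgIso R μ R' ν Φ) :
    IsMeasAlgIso R' ν R μ (Function.invFunOn Φ R) := by
  have hinv := hΦ.1.invOn_invFunOn
  have hbij : BijOn (Function.invFunOn Φ R) R' R := hΦ.1.symm hinv.symm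
  refine ⟨hbij, fun A' hA' B' hB' => ?_, fun A' hA' => ?_, fun A' hA' => ?_⟩
  · have hA := hbij.1 hA'
    have hB := hbij.1 hB'
    conv_lhs => rw [← hinv.2 hA', ← hinv.2 hB', ← hΦ.2.1 _ hA _ hB]
    exact hinv.1 (hXp.union_mem hA hB)
  · have hA := hbij.1 hA'
    conv_lhs => rw [← hinv.2 hA', ← hΦ.2.2.1 _ hA]
    exact hinv.1 (hXp.diff_mem hXp.2.1 hA)
  · rw [← hΦ.2.2.2 _ (hbij.1 hA'), hinv.2 hA']

theorem normFun_eq_zero_of_sInter_eq_empty (hXp : IsProbSpace R μ) (hYp : IsProbSpace R' ν)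
    (hΦ : IsMeasAlgIso R μ R' ν Φ) {x : X} (hempty : ⋂₀ (Φ '' {A | A ∈ R ∧ x ∈ A}) = ∅) :
    normFun R μ x = 0 := by
  have hsub : Φ '' {A | A ∈ R ∧ x ∈ A} ⊆ R' := by
    rintro _ ⟨A, ⟨hA, -⟩, rfl⟩
    exact hΦ.1.1 hA
  have hshrink : Shrinking (Φ '' {A | A ∈ R ∧ x ∈ A}) := by
    rintro _ ⟨A, ⟨hA, hxA⟩, rfl⟩ _ ⟨B, ⟨hB, hxB⟩, rfl⟩
    exact ⟨_, ⟨A ∩ B, ⟨hXp.inter_mem hA hB, hxA, hxB⟩, rfl⟩, (hΦ.map_inter hXp hA hB).le⟩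
  refine hXp.normFun_eq_zero_of_forall_pos_exists_mem fun ε hε => ?_
  obtain ⟨_, ⟨A₀, ⟨hA₀, hxA₀⟩, rfl⟩, hsmall⟩ := hYp.2.2.1.cont _ hsub hshrink hempty ε hε
  refine ⟨A₀, hA₀, hxA₀, fun A hA hxA hAA₀ => ?_⟩
  rw [← hΦ.2.2.2 A hA]
  exact hsmall _ ⟨A, ⟨hA, hxA⟩, rfl⟩ (hΦ.mono hA hA₀ hAA₀)

theorem exists_isPointImage (hXp : IsProbSpace R μ) (hYp : IsProbSpace R' ν)
    (hΦ : IsMeasAlgIso R μ R' ν Φ) {x : X} (hx : normFun R μ x ≠ 0) :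
    ∃ y, IsPointImage R Φ x y := by
  obtain ⟨y, hy⟩ := nonempty_iff_ne_empty.mpr
    (mt (hΦ.normFun_eq_zero_of_sInter_eq_empty hXp hYp) hx)
  refine ⟨y, fun A hA => ⟨fun hyA => ?_, fun hxA => hy _ ⟨A, ⟨hA, hxA⟩, rfl⟩⟩⟩
  by_contra hxA
  have hcA := hXp.diff_mem hXp.2.1 hA
  have := hy _ ⟨univ \ A, ⟨hcA, mem_univ x, hxA⟩, rfl⟩
  rw [hΦ.2.2.1 A hA] at this
  exact this.2 hyA

theorem exists_isPointImage_symm (hXp : IsProbSpace R μ) (hYp : IsProbSpace R' ν)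
    (hΦ : IsMeasAlgIso R μ R' ν Φ) {y : Y} (hy : normFun R' ν y ≠ 0) :
    ∃ x, IsPointImage R Φ x y := by
  obtain ⟨x, hx⟩ := (hΦ.symm hXp).exists_isPointImage hYp hXp hy
  refine ⟨x, fun A hA => ?_⟩
  rw [← hx (Φ A) (hΦ.1.1 hA), hΦ.1.invOn_invFunOn.1 hA]

end IsMeasAlgIso

namespace IsPointImage

variable {R : Set (Set X)} {R' : Set (Set Y)} {Φ : Set X → Set Y}

theorem left_unique (hsep : Separating R) {x₁ x₂ : X} {y : Y} (h₁ : IsPointImage R Φ x₁ y)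
    (h₂ : IsPointImage R Φ x₂ y) : x₁ = x₂ := by
  by_contra hne
  obtain ⟨A, hA, hx₁, hx₂⟩ := hsep x₁ x₂ hne
  exact hx₂ ((h₂ A hA).mp ((h₁ A hA).mpr hx₁))

theorem right_unique (hsep : Separating R') (hsurj : SurjOn Φ R R') {x : X} {y₁ y₂ : Y}
    (h₁ : IsPointImage R Φ x y₁) (h₂ : IsPointImage R Φ x y₂) : y₁ = y₂ := by
  by_contra hne
  obtain ⟨_, hA', hy₁, hy₂⟩ := hsep y₁ y₂ hne
  obtain ⟨A, hA, rfl⟩ := hsurj hA'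
  exact hy₂ ((h₂ A hA).mpr ((h₁ A hA).mp hy₁))

theorem normFun_eq {μ : Set X → K} {ν : Set Y → K} (hXp : IsProbSpace R μ)
    (hYp : IsProbSpace R' ν) (hΦ : IsMeasAlgIso R μ R' ν Φ) {x : X} {y : Y}
    (h : IsPointImage R Φ x y) : normFun R' ν y = normFun R μ x := by
  unfold normFun
  congr 1
  ext r
  constructor
  · rintro ⟨_, hA', hyA', rfl⟩
    obtain ⟨A, hA, rfl⟩ := hΦ.1.2.2 hA'
    exact ⟨A, hA, (h A hA).mp hyA', hΦ.setNorm_map hXp hYp hA⟩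
  · rintro ⟨A, hA, hxA, rfl⟩
    exact ⟨Φ A, hΦ.1.1 hA, (h A hA).mpr hxA, (hΦ.setNorm_map hXp hYp hA).symm⟩

theorem apply_conj {T : X → X} {S : Y → Y} (hT : ∀ A ∈ R, T ⁻¹' A ∈ R)
    (hΦT : ∀ A ∈ R, Φ (T ⁻¹' A) = S ⁻¹' (Φ A)) {x : X} {y : Y} (h : IsPointImage R Φ x y) :
    IsPointImage R Φ (T x) (S y) := fun A hA => by
  rw [← mem_preimage, ← hΦT A hA, h _ (hT A hA), mem_preimage]

end IsPointImage

theorem exists_bijOn_isPointImage {R : Set (Set X)} {μ : Set X → K} {R' : Set (Set Y)}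
    {ν : Set Y → K} {Φ : Set X → Set Y} (hXp : IsProbSpace R μ) (hYp : IsProbSpace R' ν)
    (hsepX : Separating R) (hsepY : Separating R') (hΦ : IsMeasAlgIso R μ R' ν Φ) :
    ∃ φ : X → Y,
      BijOn φ {x | normFun R μ x ≠ 0} {y | normFun R' ν y ≠ 0} ∧
        ∀ x, normFun R μ x ≠ 0 → IsPointImage R Φ x (φ x) := by
  have := hYp.nonempty
  choose! φ hφ using fun x (hx : normFun R μ x ≠ 0) => hΦ.exists_isPointImage hXp hYp hx
  have hnorm : ∀ x, normFun R μ x ≠ 0 → normFun R' ν (φ x) = normFun R μ x :=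
    fun x hx => (hφ x hx).normFun_eq hXp hYp hΦ
  refine ⟨φ, ⟨fun x hx => (hnorm x hx).trans_ne hx, ?_, fun y hy => ?_⟩, hφ⟩
  · exact fun x₁ hx₁ x₂ hx₂ heq => (hφ x₁ hx₁).left_unique hsepX (heq ▸ hφ x₂ hx₂)
  · obtain ⟨x, hx⟩ := hΦ.exists_isPointImage_symm hXp hYp hy
    have hx0 : normFun R μ x ≠ 0 := (hx.normFun_eq hXp hYp hΦ).symm.trans_ne hy
    exact ⟨x, hx0, (hφ x hx0).right_unique hsepY hΦ.1.2.2 hx⟩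

theorem Set.BijOn.image_inter_eq_of_mem_iff {φ : X → Y} {s : Set X} {t : Set Y}
    (hφ : BijOn φ s t) {A : Set X} {B : Set Y} (hAB : ∀ x ∈ s, φ x ∈ B ↔ x ∈ A) :
    φ '' (A ∩ s) = B ∩ t := by
  ext y
  constructor
  · rintro ⟨x, ⟨hxA, hxs⟩, rfl⟩
    exact ⟨(hAB x hxs).mpr hxA, hφ.mapsTo hxs⟩
  · rintro ⟨hyB, hyt⟩
    obtain ⟨x, hxs, rfl⟩ := hφ.surjOn hyt
    exact ⟨x, ⟨(hAB x hxs).mp hyB, hxs⟩, rfl⟩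

end PointIsomorphism

theorem stmt7_general {X Y K : Type*} [NontriviallyNormedField K]
    (R : Set (Set X)) (μ : Set X → K) (hXp : IsProbSpace R μ) (hsepX : Separating R)
    (R' : Set (Set Y)) (ν : Set Y → K) (hYp : IsProbSpace R' ν) (hsepY : Separating R')
    (T : X → X) (hT : IsInvMPT R μ T) (S : Y → Y)
    (Φ : Set X → Set Y) (hΦ : IsMeasAlgIso R μ R' ν Φ)
    (hΦT : ∀ A ∈ R, Φ (T ⁻¹' A) = S ⁻¹' (Φ A)) :
    ∃ φ : X → Y,
      Set.BijOn φ {x : X | normFun R μ x ≠ 0} {y : Y | normFun R' ν y ≠ 0} ∧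
        (∀ A ∈ R,
          φ '' (A ∩ {x : X | normFun R μ x ≠ 0}) = Φ A ∩ {y : Y | normFun R' ν y ≠ 0}) ∧
        ∀ x ∈ {x : X | normFun R μ x ≠ 0}, φ (T x) = S (φ x) := by
  obtain ⟨φ, hbij, hφ⟩ := exists_bijOn_isPointImage hXp hYp hsepX hsepY hΦ
  refine ⟨φ, hbij, fun A hA => hbij.image_inter_eq_of_mem_iff fun x hx => hφ x hx A hA,
    fun x hx => ?_⟩
  have hTx : normFun R μ (T x) ≠ 0 := (hT.normFun_apply hXp x).trans_ne hx
  exact (hφ (T x) hTx).right_unique hsepY hΦ.1.2.2 ((hφ x hx).apply_conj hT.2.2.1 hΦT)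

/-- A conjugacy `Φ` between `T` and `S` induces a point isomorphism
`φ : X ∖ X₀(μ) → Y ∖ Y₀(ν)` with `φ(A ∖ X₀(μ)) = Φ(A) ∖ Y₀(ν)` for `A ∈ R` and
`φ ∘ T = S ∘ φ` on `X ∖ X₀(μ)`. -/
theorem stmt7 {X Y K : Type*} [NontriviallyNormedField K] [CompleteSpace K]
    (hna : IsNonarchimedean (norm : K → ℝ))
    (R : Set (Set X)) (μ : Set X → K) (hXp : IsProbSpace R μ) (hsepX : Separating R)
    (hcX : ∀ x : X, ∃ f : ℕ → Set X, (∀ n, f n ∈ R) ∧ (⋃ n, f n) = Set.univ \ {x})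
    (R' : Set (Set Y)) (ν : Set Y → K) (hYp : IsProbSpace R' ν) (hsepY : Separating R')
    (hcY : ∀ y : Y, ∃ g : ℕ → Set Y, (∀ n, g n ∈ R') ∧ (⋃ n, g n) = Set.univ \ {y})
    (T : X → X) (hT : IsInvMPT R μ T) (S : Y → Y) (hS : IsInvMPT R' ν S)
    (Φ : Set X → Set Y) (hΦ : IsMeasAlgIso R μ R' ν Φ)
    (hΦT : ∀ A ∈ R, Φ (T ⁻¹' A) = S ⁻¹' (Φ A)) :
    ∃ φ : X → Y,
      Set.BijOn φ {x : X | normFun R μ x ≠ 0} {y : Y | normFun R' ν y ≠ 0} ∧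
        (∀ A ∈ R,
          φ '' (A ∩ {x : X | normFun R μ x ≠ 0}) = Φ A ∩ {y : Y | normFun R' ν y ≠ 0}) ∧
        ∀ x ∈ {x : X | normFun R μ x ≠ 0}, φ (T x) = S (φ x) :=
  stmt7_general R μ hXp hsepX R' ν hYp hsepY T hT S Φ hΦ hΦT
end
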